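/- Let α < 1 be a real number. There is a constant C > 0, depending only on α and q₁,…,q_r, such that for all reals a > 0 and b ≥ 2, the set {ξ ∈ ℤ^S∖{0} : ⟦a⋆ξ⟧ ≤ b} is finite and ∑_{ξ ∈ ℤ^S∖{0}, ⟦a⋆ξ⟧ ≤ b} ⟦a⋆ξ⟧^{−α} ≤ C·(b^{1−α}/a)·(log b)^r. -/

import Mathlib

/-!
Write `ξ = n / d` in lowest terms. Each prime power `q ^ v_q(d)` dividing `d` equals `|ξ|_q`, so
`d ≤ ∏ (1 + |ξ|_q)`; hence `d ≤ ⟦a⋆ξ⟧` and `a |n| = |a ξ| d ≤ ⟦a⋆ξ⟧`. So `ξ ↦ (n, d)` embeds the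
set into pairs with `0 < |n| ≤ b / a` and `d ≤ b` having all prime factors in `Q`. Such a `d` is
determined by its `r` exponents, each at most `log₂ b`, so there are `O((log b) ^ r)` of them.
With `β = max α 0`, every term satisfies `⟦a⋆ξ⟧ ^ (-α) ≤ b ^ (β - α) (a |n|) ^ (-β)`, and
`∑_{0 < |n| ≤ N} |n| ^ (-β) ≤ 2 N ^ (1 - β) / (1 - β)` by comparing with the increments of
`x ^ (1 - β)`.
-/

/-- `x ∈ ℤ^S`: the only primes allowed in the denominator of `x` are those of
`Q` (for `S = {∞} ∪ Q`). -/
def IsSInt (Q : Finset ℕ) (x : ℚ) : Prop :=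
  ∀ p : ℕ, p.Prime → p ∣ x.den → p ∈ Q

/-- The height `⟦a⋆ξ⟧ = (1+|a·ξ|)·∏_{q ∈ Q}(1+|ξ|_q)`, where
`|ξ|_q = q^{-v_q(ξ)}`. -/
noncomputable def ht (Q : Finset ℕ) (a : ℝ) (ξ : ℚ) : ℝ :=
  (1 + |a * (ξ : ℝ)|) * ∏ q ∈ Q, (1 + (q : ℝ) ^ (-(padicValRat q ξ)))

open Finset

lemma IsSInt.primeFactors_den_subset {Q : Finset ℕ} {ξ : ℚ} (h : IsSInt Q ξ) :
    ξ.den.primeFactors ⊆ Q :=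
  fun p hp => h p (Nat.prime_of_mem_primeFactors hp) (Nat.dvd_of_mem_primeFactors hp)

lemma pow_factorization_den_le_one_add_zpow (ξ : ℚ) (q : ℕ) :
    (q : ℝ) ^ ξ.den.factorization q ≤ 1 + (q : ℝ) ^ (-padicValRat q ξ) := by
  have hzpow : 0 ≤ (q : ℝ) ^ (-padicValRat q ξ) := by positivity
  by_cases hq : q.Prime ∧ q ∣ ξ.den
  · obtain ⟨hq, hdvd⟩ := hq
    have hnum : ¬ (q : ℤ) ∣ ξ.num := fun h =>
      hq.one_lt.ne' (Nat.eq_one_of_dvd_one (ξ.reduced ▸ Nat.dvd_gcd (Int.natCast_dvd.mp h) hdvd))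
    have hval : -padicValRat q ξ = ξ.den.factorization q := by
      rw [padicValRat_def, padicValInt.eq_zero_of_not_dvd hnum, Nat.factorization_def _ hq]
      ring
    rw [hval, zpow_natCast]
    linarith
  · have : ξ.den.factorization q = 0 := by
      rw [Nat.factorization_eq_zero_iff]
      tauto
    rw [this, pow_zero]
    linarith

lemma den_le_prod_one_add_zpow {Q : Finset ℕ} {ξ : ℚ} (hξ : IsSInt Q ξ) :
    (ξ.den : ℝ) ≤ ∏ q ∈ Q, (1 + (q : ℝ) ^ (-padicValRat q ξ)) := by
  have hden : ξ.den = ∏ q ∈ Q, q ^ ξ.den.factorization q := by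
    refine (Nat.prod_primeFactors_pow_factorization ξ.den_nz).trans
      (prod_subset hξ.primeFactors_den_subset fun q _ hq => ?_)
    rw [Finsupp.notMem_support_iff.mp hq, pow_zero]
  rw [hden, Nat.cast_prod]
  push_cast
  exact prod_le_prod (fun _ _ => by positivity) fun q _ => pow_factorization_den_le_one_add_zpow ξ q

lemma den_le_ht {Q : Finset ℕ} (a : ℝ) {ξ : ℚ} (hξ : IsSInt Q ξ) : (ξ.den : ℝ) ≤ ht Q a ξ :=
  calc (ξ.den : ℝ) = 1 * ξ.den := (one_mul _).symm
    _ ≤ ht Q a ξ := mul_le_mul (le_add_of_nonneg_right (abs_nonneg _))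
        (den_le_prod_one_add_zpow hξ) (by positivity) (by positivity)

lemma abs_mul_num_le_ht {Q : Finset ℕ} (a : ℝ) {ξ : ℚ} (hξ : IsSInt Q ξ) :
    |a * ξ.num| ≤ ht Q a ξ :=
  calc |a * ξ.num| = |a * ξ| * ξ.den := by
        rw [Rat.cast_def, abs_mul, abs_mul, abs_div, Nat.abs_cast]
        field_simp
    _ ≤ ht Q a ξ := mul_le_mul (le_add_of_nonneg_left zero_le_one)
        (den_le_prod_one_add_zpow hξ) (by positivity) (by positivity)

lemma Nat.factorization_le_log_two {d : ℕ} (hd : d ≠ 0) (p : ℕ) :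
    d.factorization p ≤ Nat.log 2 d := by
  by_cases hp : p.Prime
  · refine Nat.le_log_of_pow_le one_lt_two ?_
    exact (Nat.pow_le_pow_left hp.two_le _).trans (Nat.ordProj_le p hd)
  · simp [Nat.factorization_eq_zero_of_not_prime _ hp]

lemma card_filter_primeFactors_subset_le (Q : Finset ℕ) (B : ℕ) :
    #{d ∈ Icc 1 B | d.primeFactors ⊆ Q} ≤ (Nat.log 2 B + 1) ^ #Q := by
  let exponents (d : ℕ) : (q : ℕ) → q ∈ Q → ℕ := fun q _ => d.factorization q
  calc #{d ∈ Icc 1 B | d.primeFactors ⊆ Q}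
      ≤ #(Q.pi fun _ => range (Nat.log 2 B + 1)) := by
        refine card_le_card_of_injOn exponents (fun d hd => ?_) (fun d hd d' hd' h => ?_)
        · simp only [coe_filter, mem_Icc, Set.mem_ofPred_eq] at hd
          refine mem_pi.mpr fun q _ => mem_range_succ_iff.mpr ?_
          exact (Nat.factorization_le_log_two (by omega) q).trans (Nat.log_mono_right hd.1.2)
        · simp only [coe_filter, mem_Icc, Set.mem_ofPred_eq] at hd hd'
          refine Nat.factorization_inj (by simp; omega) (by simp; omega) (Finsupp.ext fun p => ?_)
          by_cases hp : p ∈ Q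
          · exact congrFun₂ h p hp
          · rw [Finsupp.notMem_support_iff.mp fun h => hp (hd.2 h),
              Finsupp.notMem_support_iff.mp fun h => hp (hd'.2 h)]
    _ = (Nat.log 2 B + 1) ^ #Q := by simp [card_pi]

lemma natLog_two_floor_add_one_le {b : ℝ} (hb : 2 ≤ b) :
    (Nat.log 2 ⌊b⌋₊ + 1 : ℝ) ≤ 2 / Real.log 2 * Real.log b := by
  have hlog2 : 0 < Real.log 2 := Real.log_pos one_lt_two
  have hlog : Real.log 2 ≤ Real.log b := Real.log_le_log two_pos hb
  have hfloor : (Nat.log 2 ⌊b⌋₊ : ℝ) ≤ Real.log b / Real.log 2 :=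
    calc (Nat.log 2 ⌊b⌋₊ : ℝ) ≤ Real.logb 2 ⌊b⌋₊ := mod_cast Real.natLog_le_logb _ _
      _ ≤ Real.logb 2 b := Real.logb_le_logb_of_le one_lt_two
          (Nat.cast_pos.mpr (Nat.floor_pos.mpr (by linarith))) (Nat.floor_le (by linarith))
      _ = Real.log b / Real.log 2 := rfl
  have hone : 1 ≤ Real.log b / Real.log 2 := (one_le_div hlog2).mpr hlog
  linarith [show 2 / Real.log 2 * Real.log b = 2 * (Real.log b / Real.log 2) by ring]

lemma one_sub_mul_rpow_neg_le_rpow_sub_rpow {x β : ℝ} (hx : 0 ≤ x) (hβ0 : 0 ≤ β) (hβ1 : β ≤ 1) :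
    (1 - β) * (x + 1) ^ (-β) ≤ (x + 1) ^ (1 - β) - x ^ (1 - β) := by
  have hx1 : 0 < x + 1 := by linarith
  have amgm := Real.geom_mean_le_arith_mean2_weighted (sub_nonneg.mpr hβ1) hβ0 hx hx1.le
    (sub_add_cancel 1 β)
  have hsplit : (x + 1) ^ (1 - β) = (x + 1) * (x + 1) ^ (-β) := by
    rw [sub_eq_add_neg, Real.rpow_add hx1, Real.rpow_one]
  have hcancel : (x + 1) ^ β * (x + 1) ^ (-β) = 1 := by
    rw [← Real.rpow_add hx1, add_neg_cancel, Real.rpow_zero]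
  calc (1 - β) * (x + 1) ^ (-β)
      = (x + 1) * (x + 1) ^ (-β) - ((1 - β) * x + β * (x + 1)) * (x + 1) ^ (-β) := by ring
    _ ≤ (x + 1) ^ (1 - β) - x ^ (1 - β) * (x + 1) ^ β * (x + 1) ^ (-β) := by
        rw [hsplit]
        exact sub_le_sub_left (mul_le_mul_of_nonneg_right amgm (by positivity)) _
    _ = (x + 1) ^ (1 - β) - x ^ (1 - β) := by rw [mul_assoc, hcancel, mul_one]

lemma sum_range_rpow_neg_le {β : ℝ} (hβ0 : 0 ≤ β) (hβ1 : β < 1) (N : ℕ) :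
    ∑ k ∈ range N, ((k : ℝ) + 1) ^ (-β) ≤ (N : ℝ) ^ (1 - β) / (1 - β) := by
  have h1β : 0 < 1 - β := by linarith
  rw [le_div_iff₀ h1β, sum_mul]
  calc ∑ k ∈ range N, ((k : ℝ) + 1) ^ (-β) * (1 - β)
      ≤ ∑ k ∈ range N, (((k + 1 : ℕ) : ℝ) ^ (1 - β) - (k : ℝ) ^ (1 - β)) := by
        gcongr with k
        push_cast
        linarith [one_sub_mul_rpow_neg_le_rpow_sub_rpow k.cast_nonneg hβ0 hβ1.le]
    _ = (N : ℝ) ^ (1 - β) := by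
        rw [sum_range_sub (fun k : ℕ => (k : ℝ) ^ (1 - β)), Nat.cast_zero,
          Real.zero_rpow h1β.ne', sub_zero]

lemma sum_Icc_erase_zero_abs (f : ℝ → ℝ) (N : ℕ) :
    ∑ n ∈ (Icc (-N : ℤ) N).erase 0, f |(n : ℝ)| = 2 * ∑ k ∈ range N, f (k + 1) := by
  induction N with
  | zero => simp
  | succ N ih =>
    have hinsert : (Icc (-(N + 1 : ℕ) : ℤ) (N + 1 : ℕ)).erase 0
        = insert ((N : ℤ) + 1) (insert (-(N : ℤ) - 1) ((Icc (-N : ℤ) N).erase 0)) := by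
      ext n; simp only [mem_erase, mem_Icc, mem_insert]; omega
    rw [hinsert, sum_insert (by simp; omega), sum_insert (by simp), ih, sum_range_succ]
    push_cast
    rw [show -(N : ℝ) - 1 = -(N + 1) by ring, abs_neg, abs_of_nonneg (by positivity)]
    ring

lemma sum_Icc_erase_zero_abs_rpow_neg_le {β : ℝ} (hβ0 : 0 ≤ β) (hβ1 : β < 1) (N : ℕ) :
    ∑ n ∈ (Icc (-N : ℤ) N).erase 0, |(n : ℝ)| ^ (-β) ≤ 2 * ((N : ℝ) ^ (1 - β) / (1 - β)) := by
  rw [sum_Icc_erase_zero_abs (· ^ (-β))]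
  gcongr
  exact sum_range_rpow_neg_le hβ0 hβ1 N

lemma tsum_le_sum_of_injOn {α ι : Type*} {s : Set α} (f : α → ℝ) (φ : α → ι) (T : Finset ι)
    (g : ι → ℝ) (hφ : Set.InjOn φ s) (hmaps : Set.MapsTo φ s T) (hfg : ∀ x ∈ s, f x ≤ g (φ x))
    (hg : ∀ y ∈ T, 0 ≤ g y) : ∑' x : s, f x ≤ ∑ y ∈ T, g y := by
  classical
  refine tsum_le_of_sum_le' (sum_nonneg hg) fun u => ?_
  calc ∑ x ∈ u, f x ≤ ∑ x ∈ u, g (φ x) := sum_le_sum fun x _ => hfg x x.2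
    _ = ∑ y ∈ u.image (φ ∘ (↑)), g y :=
        (sum_image fun x _ y _ h => Subtype.ext (hφ x.2 y.2 h)).symm
    _ ≤ ∑ y ∈ T, g y := sum_le_sum_of_subset_of_nonneg
        (fun y hy => by obtain ⟨x, -, rfl⟩ := mem_image.mp hy; exact hmaps x.2)
        fun y hy _ => hg y hy

noncomputable def sIntBox (Q : Finset ℕ) (a b : ℝ) : Finset (ℤ × ℕ) :=
  (Icc (-⌊b / a⌋₊ : ℤ) ⌊b / a⌋₊).erase 0 ×ˢ {d ∈ Icc 1 ⌊b⌋₊ | d.primeFactors ⊆ Q}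

section

variable {Q : Finset ℕ} {a b : ℝ} {ξ : ℚ}

lemma num_den_mem_sIntBox (ha : 0 < a) (hξ : IsSInt Q ξ) (h0 : ξ ≠ 0) (hb : ht Q a ξ ≤ b) :
    (ξ.num, ξ.den) ∈ sIntBox Q a b := by
  have hnum : (ξ.num.natAbs : ℝ) ≤ b / a := by
    rw [le_div_iff₀ ha, Nat.cast_natAbs, Int.cast_abs, mul_comm, ← abs_of_pos ha, ← abs_mul]
    exact (abs_mul_num_le_ht a hξ).trans hb
  have hnum' := Nat.le_floor hnum
  simp only [sIntBox, mem_product, mem_erase, mem_Icc, mem_filter]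
  refine ⟨⟨Rat.num_ne_zero.mpr h0, by omega, by omega⟩, ⟨ξ.pos, Nat.le_floor ?_⟩,
    hξ.primeFactors_den_subset⟩
  exact (den_le_ht a hξ).trans hb

lemma ht_rpow_neg_le {α β : ℝ} (ha : a ≠ 0) (hξ : IsSInt Q ξ) (h0 : ξ ≠ 0) (hb : ht Q a ξ ≤ b)
    (hβ : 0 ≤ β) (hαβ : α ≤ β) : ht Q a ξ ^ (-α) ≤ b ^ (β - α) * |a * ξ.num| ^ (-β) := by
  have hht : 0 < ht Q a ξ :=
    lt_of_lt_of_le (Nat.cast_pos.mpr ξ.pos) (den_le_ht a hξ)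
  have hnum : 0 < |a * ξ.num| := by
    have := Rat.num_ne_zero.mpr h0
    positivity
  calc ht Q a ξ ^ (-α) = ht Q a ξ ^ (β - α) * ht Q a ξ ^ (-β) := by
        rw [← Real.rpow_add hht]; ring_nf
    _ ≤ b ^ (β - α) * |a * ξ.num| ^ (-β) := by
        refine mul_le_mul (Real.rpow_le_rpow hht.le hb (by linarith))
          (Real.rpow_le_rpow_of_nonpos hnum (abs_mul_num_le_ht a hξ) (by linarith))
          (by positivity) (Real.rpow_nonneg (hht.le.trans hb) _)

end

lemma card_filter_primeFactors_subset_le_log {b : ℝ} (hb : 2 ≤ b) (Q : Finset ℕ) :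
    (#{d ∈ Icc 1 ⌊b⌋₊ | d.primeFactors ⊆ Q} : ℝ) ≤ (2 / Real.log 2 * Real.log b) ^ #Q :=
  calc (#{d ∈ Icc 1 ⌊b⌋₊ | d.primeFactors ⊆ Q} : ℝ) ≤ ((Nat.log 2 ⌊b⌋₊ + 1 : ℕ) : ℝ) ^ #Q :=
        mod_cast card_filter_primeFactors_subset_le Q ⌊b⌋₊
    _ ≤ (2 / Real.log 2 * Real.log b) ^ #Q := by
        gcongr
        exact_mod_cast natLog_two_floor_add_one_le hb

lemma sum_sIntBox_le (Q : Finset ℕ) {a b α β : ℝ} (ha : 0 < a) (hb : 2 ≤ b) (hβ0 : 0 ≤ β)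
    (hβ1 : β < 1) :
    ∑ p ∈ sIntBox Q a b, b ^ (β - α) * |a * p.1| ^ (-β)
      ≤ 2 * (2 / Real.log 2) ^ #Q / (1 - β) * (b ^ (1 - α) / a) * Real.log b ^ #Q := by
  have hb0 : 0 < b := by linarith
  have h1β : 0 < 1 - β := by linarith
  have hscale : b ^ (β - α) * a ^ (-β) * (b / a) ^ (1 - β) = b ^ (1 - α) / a := by
    calc b ^ (β - α) * a ^ (-β) * (b / a) ^ (1 - β)
        = b ^ (β - α) * b ^ (1 - β) / (a ^ β * a ^ (1 - β)) := by
          rw [Real.div_rpow hb0.le ha.le, Real.rpow_neg ha.le]; field_simp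
      _ = b ^ (1 - α) / a := by
          rw [← Real.rpow_add hb0, ← Real.rpow_add ha]; ring_nf; rw [Real.rpow_one]
  calc ∑ p ∈ sIntBox Q a b, b ^ (β - α) * |a * p.1| ^ (-β)
      = #{d ∈ Icc 1 ⌊b⌋₊ | d.primeFactors ⊆ Q} * (b ^ (β - α) * a ^ (-β) *
          ∑ n ∈ (Icc (-⌊b / a⌋₊ : ℤ) ⌊b / a⌋₊).erase 0, |(n : ℝ)| ^ (-β)) := by
        simp only [sIntBox, sum_product_right, sum_const, nsmul_eq_mul, mul_sum, abs_mul,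
          abs_of_pos ha, Real.mul_rpow ha.le (abs_nonneg _), mul_assoc]
    _ ≤ (2 / Real.log 2 * Real.log b) ^ #Q *
          (b ^ (β - α) * a ^ (-β) * (2 * ((b / a) ^ (1 - β) / (1 - β)))) := by
        have hcard := card_filter_primeFactors_subset_le_log hb Q
        refine mul_le_mul hcard (mul_le_mul_of_nonneg_left ?_ (by positivity)) (by positivity)
          ((Nat.cast_nonneg _).trans hcard)
        refine (sum_Icc_erase_zero_abs_rpow_neg_le hβ0 hβ1 _).trans ?_
        gcongr
        exact Nat.floor_le (by positivity)
    _ = 2 * (2 / Real.log 2) ^ #Q / (1 - β) * (b ^ (1 - α) / a) * Real.log b ^ #Q := by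
        rw [← hscale]; ring

theorem stmt11_general (Q : Finset ℕ) (α : ℝ) (hα : α < 1) :
    ∃ C > (0 : ℝ), ∀ a b : ℝ, 0 < a → 2 ≤ b →
      {ξ : ℚ | IsSInt Q ξ ∧ ξ ≠ 0 ∧ ht Q a ξ ≤ b}.Finite ∧
      ∑' ξ : {ξ : ℚ // IsSInt Q ξ ∧ ξ ≠ 0 ∧ ht Q a ξ ≤ b}, ht Q a ξ.1 ^ (-α) ≤
        C * (b ^ (1 - α) / a) * Real.log b ^ Q.card := by
  obtain ⟨β, hβ0, hβ1, hαβ⟩ : ∃ β, 0 ≤ β ∧ β < 1 ∧ α ≤ β :=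
    ⟨max α 0, le_max_right _ _, max_lt hα one_pos, le_max_left _ _⟩
  refine ⟨2 * (2 / Real.log 2) ^ #Q / (1 - β), div_pos (by positivity) (sub_pos.mpr hβ1),
    fun a b ha hb => ?_⟩
  have hinj : Function.Injective fun ξ : ℚ => (ξ.num, ξ.den) :=
    fun x y h => Rat.ext (congrArg Prod.fst h) (congrArg Prod.snd h)
  have hmaps : Set.MapsTo (fun ξ : ℚ => (ξ.num, ξ.den))
      {ξ | IsSInt Q ξ ∧ ξ ≠ 0 ∧ ht Q a ξ ≤ b} (sIntBox Q a b) :=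
    fun ξ ⟨hξ, h0, hξb⟩ => num_den_mem_sIntBox ha hξ h0 hξb
  refine ⟨((sIntBox Q a b).finite_toSet.preimage hinj.injOn).subset hmaps, ?_⟩
  calc _ ≤ ∑ p ∈ sIntBox Q a b, b ^ (β - α) * |a * p.1| ^ (-β) :=
        tsum_le_sum_of_injOn _ _ _ _ hinj.injOn hmaps
          (fun ξ ⟨hξ, h0, hξb⟩ => ht_rpow_neg_le ha.ne' hξ h0 hξb hβ0 hαβ)
          fun _ _ => by positivity
    _ ≤ _ := sum_sIntBox_le Q ha hb hβ0 hβ1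

/-- For `α < 1` there is `C > 0` (depending only on `α` and `Q`) such that for
all `a > 0` and `b ≥ 2` the set `{ξ ∈ ℤ^S∖{0} : ⟦a⋆ξ⟧ ≤ b}` is finite and
`∑_{ξ ∈ ℤ^S∖{0}, ⟦a⋆ξ⟧ ≤ b} ⟦a⋆ξ⟧^{-α} ≤ C·(b^{1-α}/a)·(log b)^r`. -/
theorem stmt11 (Q : Finset ℕ) (hQ : ∀ q ∈ Q, q.Prime) (α : ℝ) (hα : α < 1) :
    ∃ C > (0 : ℝ), ∀ a b : ℝ, 0 < a → 2 ≤ b →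
      {ξ : ℚ | IsSInt Q ξ ∧ ξ ≠ 0 ∧ ht Q a ξ ≤ b}.Finite ∧
      ∑' ξ : {ξ : ℚ // IsSInt Q ξ ∧ ξ ≠ 0 ∧ ht Q a ξ ≤ b}, ht Q a ξ.1 ^ (-α) ≤
        C * (b ^ (1 - α) / a) * Real.log b ^ Q.card :=
  stmt11_general Q α hα
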